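/- arXiv:2009.13709 — 3 statements merged into one kernel-verified Lean document; each statement's English description precedes it below -/
import Mathlib

section
/- Let z ≥ 1, r ≥ 1 and g ≥ 3 be integers and let G be a [z,r;g]-mixed cage. Then G is strongly connected: for every two vertices u and v of G there exists a walk from u to v (traversing edges in either direction and arcs from tail to head) and a walk from v to u. -/
/-- A mixed graph: a simple undirected graph together with a loopless arc
relation on the same vertex set, such that no pair of vertices joined by an
edge is also joined by an arc in either direction. -/
structure MixedGraph (V : Type) where
  edge : SimpleGraph V
  arc : V → V → Prop
  arc_irrefl : ∀ v, ¬ arc v v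
  no_overlap : ∀ u v, edge.Adj u v → ¬ arc u v ∧ ¬ arc v u

namespace MixedGraph

variable {V : Type}

/-- A single step of a walk in a mixed graph: traverse an edge (in either
direction, since `edge.Adj` is symmetric) or an arc from tail to head. -/
def Step (M : MixedGraph V) (u v : V) : Prop :=
  M.edge.Adj u v ∨ M.arc u v

/-- `M` has a cycle of length `n`: a cyclic sequence of `n ≥ 3` pairwise
distinct vertices, each consecutive pair joined by a step. -/
def HasCycleOfLength (M : MixedGraph V) (n : ℕ) : Prop :=
  3 ≤ n ∧ ∃ c : ZMod n → V, Function.Injective c ∧ ∀ i, M.Step (c i) (c (i + 1))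

/-- `M` has girth `g`: it has a cycle of length `g` and no shorter cycle. -/
def HasGirth (M : MixedGraph V) (g : ℕ) : Prop :=
  M.HasCycleOfLength g ∧ ∀ n, M.HasCycleOfLength n → g ≤ n

/-- `M` is a `[z,r;g]`-mixed graph: every vertex has out-degree `z` and
in-degree `z` in the arc relation, degree `r` in the undirected graph, and
the girth of `M` is `g`. -/
def IsMixed (M : MixedGraph V) (z r g : ℕ) : Prop :=
  (∀ v, Nat.card {w // M.arc v w} = z) ∧
  (∀ v, Nat.card {w // M.arc w v} = z) ∧
  (∀ v, Nat.card {w // M.edge.Adj v w} = r) ∧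
  M.HasGirth g

/-- A `[z,r;g]`-mixed cage: a finite `[z,r;g]`-mixed graph of minimum order. -/
def IsCage (M : MixedGraph V) (z r g : ℕ) : Prop :=
  Finite V ∧ M.IsMixed z r g ∧
    ∀ (n : ℕ) (M' : MixedGraph (Fin n)), M'.IsMixed z r g → Nat.card V ≤ n

end MixedGraph

/-- `n[z,r;g]`: the minimum order of a `[z,r;g]`-mixed graph. -/
noncomputable def mixedCageNum (z r g : ℕ) : ℕ :=
  sInf {n : ℕ | ∃ M : MixedGraph (Fin n), M.IsMixed z r g}

/-!
A set of vertices `S` from which no step leaves or enters must be the whole of a cage: the subgraph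
induced on whichever of `S`, `Sᶜ` contains a shortest cycle is again a `[z,r;g]`-mixed graph, so
by minimality it has all the vertices. The set of vertices from which a fixed vertex `v` can be
reached is closed under stepping backwards; it is also closed under following an arc forwards,
because in a finite digraph with in-degree equal to out-degree at every vertex, the arcs with head
in a predecessor-closed set `S` are among the arcs with tail in `S` and are equally many. Hence
this set is everything.
-/

theorem Relation.mem_of_rel_of_mem_of_pred_closed {V : Type*} [Finite V] {R : V → V → Prop}
    (hdeg : ∀ v, Nat.card {w // R w v} = Nat.card {w // R v w}) {S : Set V}
    (hS : ∀ ⦃x y⦄, R x y → y ∈ S → x ∈ S) ⦃x y : V⦄ (hxy : R x y) (hx : x ∈ S) : y ∈ S := by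
  classical
  have := Fintype.ofFinite V
  set A : Set (V × V) := {p | R p.1 p.2 ∧ p.2 ∈ S}
  set B : Set (V × V) := {p | R p.1 p.2 ∧ p.1 ∈ S}
  have hAB : A ⊆ B := fun p hp => ⟨hp.1, hS hp.1 hp.2⟩
  have hcardA : A.ncard = ∑ y : S, Nat.card {w // R w y} := by
    rw [← Nat.card_coe_set_eq, ← Nat.card_sigma]
    exact Nat.card_congr
      { toFun := fun p => ⟨⟨p.1.2, p.2.2⟩, ⟨p.1.1, p.2.1⟩⟩
        invFun := fun q => ⟨(q.2.1, q.1.1), q.2.2, q.1.2⟩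
        left_inv := fun _ => rfl
        right_inv := fun _ => rfl }
  have hcardB : B.ncard = ∑ x : S, Nat.card {w // R x w} := by
    rw [← Nat.card_coe_set_eq, ← Nat.card_sigma]
    exact Nat.card_congr
      { toFun := fun p => ⟨⟨p.1.1, p.2.2⟩, ⟨p.1.2, p.2.1⟩⟩
        invFun := fun q => ⟨(q.1.1, q.2.1), q.2.2, q.1.2⟩
        left_inv := fun _ => rfl
        right_inv := fun _ => rfl }
  have hAeqB : A = B :=
    Set.eq_of_subset_of_ncard_le hAB (by simp only [hcardA, hcardB, hdeg, le_refl])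
  exact (hAeqB ▸ (⟨hxy, hx⟩ : (x, y) ∈ B) : (x, y) ∈ A).2

theorem Nat.card_subtype_comp_of_injective {W V : Type*} {f : W → V}
    (hf : Function.Injective f) {p : V → Prop} (hp : ∀ v, p v → v ∈ Set.range f) :
    Nat.card {w // p (f w)} = Nat.card {v // p v} :=
  Nat.card_congr <|
    ((Equiv.ofInjective f hf).subtypeEquiv fun _ => Iff.rfl).trans
      (Equiv.subtypeSubtypeEquivSubtype fun {v} => hp v)

namespace MixedGraph

variable {V W : Type}

def comap (M : MixedGraph V) (f : W → V) : MixedGraph W where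
  edge := M.edge.comap f
  arc a b := M.arc (f a) (f b)
  arc_irrefl a := M.arc_irrefl (f a)
  no_overlap a b := M.no_overlap (f a) (f b)

def IsStepClosed (M : MixedGraph V) (S : Set V) : Prop :=
  ∀ ⦃x y⦄, M.Step x y → (x ∈ S ↔ y ∈ S)

theorem IsStepClosed.compl {M : MixedGraph V} {S : Set V} (hS : M.IsStepClosed S) :
    M.IsStepClosed Sᶜ :=
  fun _ _ hxy => not_congr (hS hxy)

theorem IsStepClosed.mem_of_cycle {M : MixedGraph V} {S : Set V} (hS : M.IsStepClosed S)
    {n : ℕ} [NeZero n] {c : ZMod n → V} (hc : ∀ i, M.Step (c i) (c (i + 1))) (h0 : c 0 ∈ S)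
    (i : ZMod n) : c i ∈ S := by
  obtain ⟨k, rfl⟩ := ZMod.natCast_zmod_surjective i
  induction k with
  | zero => simpa using h0
  | succ k ih => simpa using (hS (hc k)).1 ih

theorem isStepClosed_of_pred_closed [Finite V] {M : MixedGraph V}
    (hdeg : ∀ v, Nat.card {w // M.arc w v} = Nat.card {w // M.arc v w}) {S : Set V}
    (hS : ∀ ⦃x y⦄, M.Step x y → y ∈ S → x ∈ S) : M.IsStepClosed S := by
  intro x y hxy
  refine ⟨fun hx => ?_, hS hxy⟩
  rcases hxy with hedge | harc
  · exact hS (Or.inl hedge.symm) hx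
  · exact Relation.mem_of_rel_of_mem_of_pred_closed hdeg (fun _ _ h => hS (Or.inr h)) harc hx

theorem HasCycleOfLength.of_comap {M : MixedGraph V} {f : W → V} (hf : Function.Injective f)
    {n : ℕ} (h : (M.comap f).HasCycleOfLength n) : M.HasCycleOfLength n := by
  obtain ⟨hn, c, hc, hstep⟩ := h
  exact ⟨hn, f ∘ c, hf.comp hc, hstep⟩

theorem IsMixed.comap {M : MixedGraph V} {z r g : ℕ} (hM : M.IsMixed z r g) {f : W → V}
    (hf : Function.Injective f) (hS : M.IsStepClosed (Set.range f))
    (hcyc : (M.comap f).HasCycleOfLength g) : (M.comap f).IsMixed z r g := by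
  obtain ⟨hout, hin, hdeg, -, hgirth⟩ := hM
  have hrange {v : W} {w : V} (h : M.Step (f v) w ∨ M.Step w (f v)) : w ∈ Set.range f := by
    rcases h with h | h
    · exact (hS h).1 ⟨v, rfl⟩
    · exact (hS h).2 ⟨v, rfl⟩
  refine ⟨fun v => ?_, fun v => ?_, fun v => ?_, hcyc, fun n hn => hgirth n (hn.of_comap hf)⟩
  · exact (Nat.card_subtype_comp_of_injective hf fun w h => hrange (.inl (.inr h))).trans (hout _)
  · exact (Nat.card_subtype_comp_of_injective hf fun w h => hrange (.inr (.inr h))).trans (hin _)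
  · exact (Nat.card_subtype_comp_of_injective hf fun w h => hrange (.inl (.inl h))).trans (hdeg _)

theorem IsCage.eq_univ_of_isStepClosed {M : MixedGraph V} {z r g : ℕ} (hM : M.IsCage z r g)
    {S : Set V} (hS : M.IsStepClosed S) {c : ZMod g → V} (hc : Function.Injective c)
    (hstep : ∀ i, M.Step (c i) (c (i + 1))) (h0 : c 0 ∈ S) : S = Set.univ := by
  obtain ⟨_, hmixed, hmin⟩ := hM
  have hg : 3 ≤ g := hmixed.2.2.2.1.1
  have : NeZero g := ⟨by omega⟩
  have hcS := hS.mem_of_cycle hstep h0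
  set e := Finite.equivFin S
  set f : Fin (Nat.card S) → V := Subtype.val ∘ e.symm
  have hf : Function.Injective f := Subtype.val_injective.comp e.symm.injective
  have hrange : Set.range f = S := by
    rw [Set.range_comp, e.symm.range_eq_univ, Set.image_univ, Subtype.range_coe]
  have hcyc : (M.comap f).HasCycleOfLength g := by
    have hfc (x : S) : f (e x) = x := congrArg Subtype.val (e.symm_apply_apply x)
    refine ⟨hg, fun i => e ⟨c i, hcS i⟩, fun i j h => hc ?_, fun i => ?_⟩
    · simpa only [hfc] using congrArg f h
    · change M.Step (f _) (f _)
      rw [hfc, hfc]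
      exact hstep i
  have hle := hmin _ _ (hmixed.comap hf (hrange.symm ▸ hS) hcyc)
  by_contra hne
  exact (Set.ncard_lt_card hne).not_ge (by rwa [← Nat.card_coe_set_eq])

theorem IsCage.eq_empty_or_eq_univ_of_isStepClosed {M : MixedGraph V} {z r g : ℕ}
    (hM : M.IsCage z r g) {S : Set V} (hS : M.IsStepClosed S) : S = ∅ ∨ S = Set.univ := by
  obtain ⟨-, -, -, ⟨-, c, hc, hstep⟩, -⟩ := hM.2.1
  by_cases h0 : c 0 ∈ S
  · exact .inr (hM.eq_univ_of_isStepClosed hS hc hstep h0)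
  · exact .inl (Set.compl_univ_iff.mp (hM.eq_univ_of_isStepClosed hS.compl hc hstep h0))

end MixedGraph

theorem stmt_2_general {V : Type} (z r g : ℕ)
    (M : MixedGraph V) (hM : M.IsCage z r g) :
    ∀ u v : V, Relation.ReflTransGen M.Step u v := by
  intro u v
  have := hM.1
  set S : Set V := {x | Relation.ReflTransGen M.Step x v}
  have hdeg (w : V) : Nat.card {x // M.arc x w} = Nat.card {x // M.arc w x} := by
    rw [hM.2.1.2.1, hM.2.1.1]
  have hS : M.IsStepClosed S :=
    MixedGraph.isStepClosed_of_pred_closed hdeg fun _ _ hxy hy => .head hxy hy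
  rcases hM.eq_empty_or_eq_univ_of_isStepClosed hS with hempty | huniv
  · have hv : v ∈ S := .refl
    simp [hempty] at hv
  · exact (huniv ▸ Set.mem_univ u : u ∈ S)

/-- Every `[z,r;g]`-mixed cage is strongly connected: between any two vertices
there is a walk traversing edges in either direction and arcs from tail to
head. -/
theorem stmt_2 {V : Type} (z r g : ℕ) (hz : 1 ≤ z) (hr : 1 ≤ r) (hg : 3 ≤ g)
    (M : MixedGraph V) (hM : M.IsCage z r g) :
    ∀ u v : V, Relation.ReflTransGen M.Step u v :=
  stmt_2_general z r g M hM
end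

section
/- Let r ≥ 2 and g ≥ 3 be integers, and let H be an r-regular simple graph of girth g on n vertices. Then for every integer z' with 1 ≤ z' ≤ n there exists a [z',r;g]-mixed graph of order g·n; consequently n[z',r;g] ≤ g·n. -/
open Function Finset

namespace SimpleGraph

variable {V : Type*} {H : SimpleGraph V}

/-- `ZMod (k + 2)` is definitionally `Fin (k + 2)`, the vertex type of `cycleGraph (k + 2)`. -/
lemma cycleGraph_isContained_of_injective {k : ℕ} (c : ZMod (k + 2) → V) (hc : Injective c)
    (hadj : ∀ i, H.Adj (c i) (c (i + 1))) : cycleGraph (k + 2) ⊑ H := by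
  refine ⟨⟨⟨c, fun {a b} h => ?_⟩, hc⟩⟩
  rcases h with h | h <;> rw [sub_eq_iff_eq_add'] at h <;> subst h
  exacts [(hadj b).symm, hadj a]

lemma girth_le_of_injective {m : ℕ} (hm : 3 ≤ m) (c : ZMod m → V) (hc : Injective c)
    (hadj : ∀ i, H.Adj (c i) (c (i + 1))) : H.girth ≤ m := by
  obtain ⟨k, rfl⟩ : ∃ k, m = k + 2 := ⟨m - 2, by omega⟩
  obtain ⟨_, p, hp, hlen⟩ :=
    (cycleGraph_isContained_iff (by omega)).mp (cycleGraph_isContained_of_injective c hc hadj)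
  exact hlen ▸ girth_le_length hp

end SimpleGraph

namespace ZMod

variable {m : ℕ} [NeZero m]

lemma card_val_lt {k : ℕ} (hk : k ≤ m) : Nat.card {a : ZMod m // a.val < k} = k := by
  obtain ⟨m, rfl⟩ : ∃ m', m = m' + 1 := Nat.exists_eq_succ_of_ne_zero (NeZero.ne m)
  rw [Nat.card_eq_fintype_card]
  exact Fintype.card_fin_lt_of_le hk

lemma sum_add_one_sub {G : Type*} [AddCommGroup G] (f : ZMod m → G) :
    ∑ i, (f (i + 1) - f i) = 0 := by
  rw [sum_sub_distrib, sub_eq_zero]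
  exact Fintype.sum_equiv (Equiv.addRight 1) _ _ fun _ => rfl

lemma apply_eq_apply_zero_of_add_one {α : Type*} {f : ZMod m → α}
    (hf : ∀ i, f (i + 1) = f i) (i : ZMod m) : f i = f 0 := by
  obtain ⟨k, rfl⟩ := natCast_zmod_surjective i
  induction k with
  | zero => simp
  | succ k ih => rw [Nat.cast_succ, hf, ih]

end ZMod

lemma Nat.card_subtype_fst_eq_and {α β : Type*} (a : α) (P : β → Prop) :
    Nat.card {x : α × β // x.1 = a ∧ P x.2} = Nat.card {b // P b} := by
  rw [Nat.card_congr (Equiv.subtypeProdEquivProd (p := (· = a)) (q := P)), Nat.card_prod,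
    Nat.card_unique, one_mul]

namespace MixedGraph

variable {V W : Type} {z r g : ℕ}

def map (e : V ≃ W) (M : MixedGraph V) : MixedGraph W where
  edge := M.edge.comap e.symm
  arc a b := M.arc (e.symm a) (e.symm b)
  arc_irrefl _ := M.arc_irrefl _
  no_overlap _ _ h := M.no_overlap _ _ h

lemma hasCycleOfLength_map_iff (e : V ≃ W) (M : MixedGraph V) {n : ℕ} :
    (M.map e).HasCycleOfLength n ↔ M.HasCycleOfLength n := by
  constructor
  · rintro ⟨hn, c, hc, hstep⟩
    exact ⟨hn, e.symm ∘ c, e.symm.injective.comp hc, hstep⟩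
  · rintro ⟨hn, c, hc, hstep⟩
    refine ⟨hn, e ∘ c, e.injective.comp hc, fun i => ?_⟩
    simpa [map, Step] using hstep i

lemma IsMixed.map (e : V ≃ W) {M : MixedGraph V} (h : M.IsMixed z r g) :
    (M.map e).IsMixed z r g := by
  obtain ⟨hout, hin, hdeg, hcyc, hmin⟩ := h
  refine ⟨fun v => ?_, fun v => ?_, fun v => ?_, (hasCycleOfLength_map_iff e M).mpr hcyc,
    fun n hn => hmin n ((hasCycleOfLength_map_iff e M).mp hn)⟩
  · exact (Nat.card_congr (e.symm.subtypeEquiv fun _ => Iff.rfl)).trans (hout _)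
  · exact (Nat.card_congr (e.symm.subtypeEquiv fun _ => Iff.rfl)).trans (hin _)
  · exact (Nat.card_congr (e.symm.subtypeEquiv fun _ => Iff.rfl)).trans (hdeg _)

lemma IsMixed.exists_fin [Finite V] {M : MixedGraph V} (h : M.IsMixed z r g) {N : ℕ}
    (hN : Nat.card V = N) : ∃ M' : MixedGraph (Fin N), M'.IsMixed z r g :=
  ⟨M.map (Finite.equivFinOfCardEq hN), h.map _⟩

end MixedGraph

section Layered

variable {V : Type} (g : ℕ) [Fact (1 < g)] {n : ℕ} (z' : ℕ) (H : SimpleGraph V)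
  (e : V ≃ ZMod n)

def layeredMixedGraph : MixedGraph (ZMod g × V) where
  edge :=
    { Adj a b := a.1 = b.1 ∧ H.Adj a.2 b.2
      symm := ⟨fun _ _ h => ⟨h.1.symm, h.2.symm⟩⟩
      loopless := ⟨fun _ h => H.loopless.irrefl _ h.2⟩ }
  arc a b := b.1 = a.1 + 1 ∧ (e b.2 - e a.2).val < z'
  arc_irrefl _ h := one_ne_zero (left_eq_add.mp h.1)
  no_overlap _ _ h :=
    ⟨fun ha => one_ne_zero (left_eq_add.mp (h.1.trans ha.1)),
      fun ha => one_ne_zero (left_eq_add.mp (h.1.symm.trans ha.1))⟩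

variable {g z' H e}

lemma card_layeredMixedGraph_arc_out [NeZero n] (hz : z' ≤ n) (v : ZMod g × V) :
    Nat.card {w // (layeredMixedGraph g z' H e).arc v w} = z' := by
  obtain ⟨i, u⟩ := v
  calc Nat.card {w : ZMod g × V // w.1 = i + 1 ∧ (e w.2 - e u).val < z'}
      = Nat.card {v : V // (e v - e u).val < z'} :=
      Nat.card_subtype_fst_eq_and (i + 1) fun v => (e v - e u).val < z'
    _ = Nat.card {k : ZMod n // k.val < z'} :=
      Nat.card_congr ((e.trans (Equiv.subRight (e u))).subtypeEquiv fun _ => Iff.rfl)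
    _ = z' := ZMod.card_val_lt hz

lemma card_layeredMixedGraph_arc_in [NeZero n] (hz : z' ≤ n) (v : ZMod g × V) :
    Nat.card {w // (layeredMixedGraph g z' H e).arc w v} = z' := by
  obtain ⟨i, u⟩ := v
  calc Nat.card {w : ZMod g × V // i = w.1 + 1 ∧ (e u - e w.2).val < z'}
      = Nat.card {w : ZMod g × V // w.1 = i - 1 ∧ (e u - e w.2).val < z'} :=
      Nat.card_congr (Equiv.subtypeEquivRight fun _ => and_congr_left' (by
        rw [eq_sub_iff_add_eq, eq_comm]))
    _ = Nat.card {v : V // (e u - e v).val < z'} :=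
      Nat.card_subtype_fst_eq_and (i - 1) fun v => (e u - e v).val < z'
    _ = Nat.card {k : ZMod n // k.val < z'} :=
      Nat.card_congr ((e.trans (Equiv.subLeft (e u))).subtypeEquiv fun _ => Iff.rfl)
    _ = z' := ZMod.card_val_lt hz

lemma card_layeredMixedGraph_edge (v : ZMod g × V) :
    Nat.card {w // (layeredMixedGraph g z' H e).edge.Adj v w} = Nat.card (H.neighborSet v.2) := by
  obtain ⟨i, u⟩ := v
  calc Nat.card {w : ZMod g × V // i = w.1 ∧ H.Adj u w.2}
      = Nat.card {w : ZMod g × V // w.1 = i ∧ H.Adj u w.2} :=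
      Nat.card_congr (Equiv.subtypeEquivRight fun _ => and_congr_left' eq_comm)
    _ = _ := Nat.card_subtype_fst_eq_and _ _

lemma layeredMixedGraph_hasCycleOfLength (hg : 3 ≤ g) (hz : 0 < z') :
    (layeredMixedGraph g z' H e).HasCycleOfLength g :=
  ⟨hg, fun i => (i, e.symm 0), fun _ _ h => congrArg Prod.fst h,
    fun _ => Or.inr ⟨rfl, by simpa using hz⟩⟩

lemma dvd_card_layeredMixedGraph_arcSteps {m : ℕ} [NeZero m] {c : ZMod m → ZMod g × V}
    (hstep : ∀ i, (layeredMixedGraph g z' H e).Step (c i) (c (i + 1))) :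
    g ∣ #{i | (c (i + 1)).1 = (c i).1 + 1} := by
  have hlayer : ∀ i, (c (i + 1)).1 - (c i).1 = if (c (i + 1)).1 = (c i).1 + 1 then 1 else 0 := by
    intro i
    rcases hstep i with ⟨h, -⟩ | ⟨h, -⟩
    · rw [← h, if_neg (fun h' => one_ne_zero (left_eq_add.mp h')), sub_self]
    · rw [if_pos h, h, add_sub_cancel_left]
  rw [← ZMod.natCast_eq_zero_iff, ← sum_boole]
  exact (sum_congr rfl fun i _ => (hlayer i).symm).trans (ZMod.sum_add_one_sub fun i => (c i).1)

lemma le_of_layeredMixedGraph_hasCycleOfLength (hgirth : g ≤ H.girth) {m : ℕ}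
    (hc : (layeredMixedGraph g z' H e).HasCycleOfLength m) : g ≤ m := by
  obtain ⟨hm, c, hinj, hstep⟩ := hc
  have : NeZero m := ⟨by omega⟩
  rcases Nat.eq_zero_or_pos #{i | (c (i + 1)).1 = (c i).1 + 1} with hA | hA
  · rw [card_eq_zero, filter_eq_empty_iff] at hA
    have hedge : ∀ i, (c i).1 = (c (i + 1)).1 ∧ H.Adj (c i).2 (c (i + 1)).2 := fun i =>
      (hstep i).resolve_right fun h => hA (mem_univ i) h.1
    have hconst :=
      ZMod.apply_eq_apply_zero_of_add_one (f := fun i => (c i).1) fun i => (hedge i).1.symm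
    have hinj' : Injective fun i => (c i).2 := fun a b hab =>
      hinj (Prod.ext ((hconst a).trans (hconst b).symm) hab)
    exact hgirth.trans (H.girth_le_of_injective hm _ hinj' fun i => (hedge i).2)
  · calc g ≤ #{i | (c (i + 1)).1 = (c i).1 + 1} :=
          Nat.le_of_dvd hA (dvd_card_layeredMixedGraph_arcSteps hstep)
      _ ≤ m := (card_le_univ _).trans (ZMod.card m).le

theorem isMixed_layeredMixedGraph {r : ℕ} (hg : 3 ≤ g) (hz : 0 < z') (hzn : z' ≤ n)
    (hreg : ∀ v, Nat.card (H.neighborSet v) = r) (hgirth : H.girth = g) :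
    (layeredMixedGraph g z' H e).IsMixed z' r g := by
  have : NeZero n := ⟨by omega⟩
  exact ⟨card_layeredMixedGraph_arc_out hzn, card_layeredMixedGraph_arc_in hzn,
    fun v => (card_layeredMixedGraph_edge v).trans (hreg v.2),
    layeredMixedGraph_hasCycleOfLength hg hz,
    fun _ => le_of_layeredMixedGraph_hasCycleOfLength hgirth.ge⟩

end Layered

theorem stmt_7_general {V : Type} [Fintype V] (r g : ℕ) (hg : 3 ≤ g)
    (H : SimpleGraph V)
    (hreg : ∀ v : V, Nat.card (H.neighborSet v) = r)
    (hgirth : H.girth = (g : ℕ∞))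
    (z' : ℕ) (hz'1 : 1 ≤ z') (hz'n : z' ≤ Fintype.card V) :
    (∃ M : MixedGraph (Fin (g * Fintype.card V)), M.IsMixed z' r g) ∧
      mixedCageNum z' r g ≤ g * Fintype.card V := by
  have : Fact (1 < g) := ⟨by omega⟩
  have : NeZero (Fintype.card V) := ⟨by omega⟩
  let e : V ≃ ZMod (Fintype.card V) := Fintype.equivOfCardEq (ZMod.card _).symm
  have hlayered := isMixed_layeredMixedGraph (e := e) hg hz'1 hz'n hreg (by exact_mod_cast hgirth)
  obtain ⟨M, hM⟩ := hlayered.exists_fin (N := g * Fintype.card V) (by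
    rw [Nat.card_prod, Nat.card_zmod, Nat.card_eq_fintype_card])
  exact ⟨⟨M, hM⟩, Nat.sInf_le ⟨M, hM⟩⟩

/-- If `H` is an `r`-regular simple graph of girth `g` on `n` vertices, then
for every `1 ≤ z' ≤ n` there is a `[z',r;g]`-mixed graph of order `g·n`;
consequently `n[z',r;g] ≤ g·n`. -/
theorem stmt_7 {V : Type} [Fintype V] (r g : ℕ) (hr : 2 ≤ r) (hg : 3 ≤ g)
    (H : SimpleGraph V)
    (hreg : ∀ v : V, Nat.card (H.neighborSet v) = r)
    (hgirth : H.girth = (g : ℕ∞))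
    (z' : ℕ) (hz'1 : 1 ≤ z') (hz'n : z' ≤ Fintype.card V) :
    (∃ M : MixedGraph (Fin (g * Fintype.card V)), M.IsMixed z' r g) ∧
      mixedCageNum z' r g ≤ g * Fintype.card V :=
  stmt_7_general r g hg H hreg hgirth z' hz'1 hz'n
end

section
/- Let F be a finite field with q = |F| ≥ 3. Let B_q be the bipartite graph whose vertex set is the disjoint union of a set of points P = F × F and a set of lines L = F × F, where a point (x,y) is adjacent to a line (m,b) if and only if y = m·x + b. Then B_q is q-regular, has 2q² vertices, and has girth 6. -/
/-- The incidence graph of the biaffine plane over a field `F`: points are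
pairs `(x, y)` (the left summand), lines are pairs `(m, b)` (the right
summand), and a point is adjacent to a line iff `y = m * x + b`. -/
def biaffine (F : Type) [Field F] : SimpleGraph ((F × F) ⊕ (F × F)) where
  Adj u v :=
    (∃ x y m b : F, u = Sum.inl (x, y) ∧ v = Sum.inr (m, b) ∧ y = m * x + b) ∨
    (∃ x y m b : F, u = Sum.inr (m, b) ∧ v = Sum.inl (x, y) ∧ y = m * x + b)
  symm := by
    constructor
    intro u v h
    rcases h with ⟨x, y, m, b, hu, hv, hxy⟩ | ⟨x, y, m, b, hu, hv, hxy⟩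
    · exact Or.inr ⟨x, y, m, b, hv, hu, hxy⟩
    · exact Or.inl ⟨x, y, m, b, hv, hu, hxy⟩
  loopless := by
    constructor
    intro u h
    rcases h with ⟨x, y, m, b, hu, hv, _⟩ | ⟨x, y, m, b, hu, hv, _⟩ <;>
      simp [hu] at hv

/-!
The graph is bipartite (points versus lines), so every cycle has even length, and it has no
4-cycle because two distinct points lie on at most one common non-vertical line: two such lines
through them have equal slope since the points have distinct abscissae, and then equal intercept.
Conversely, for `a ∉ {0, 1}` the points `(0, 0)`, `(1, 0)`, `(a, a (a - 1))` are pairwise joined by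
the lines of slopes `0`, `a`, `a - 1`, which gives a 6-cycle.
-/

open SimpleGraph

namespace SimpleGraph.Walk

lemma IsCycle.exists_adj_of_length_eq_four {V : Type*} {G : SimpleGraph V} {v : V}
    {p : G.Walk v v} (hp : p.IsCycle) (hlen : p.length = 4) :
    ∃ a b c d, a ≠ c ∧ b ≠ d ∧ G.Adj a b ∧ G.Adj b c ∧ G.Adj c d ∧ G.Adj d a := by
  obtain ⟨f⟩ := (cycleGraph_isContained_iff (by norm_num)).mpr ⟨v, p, hp, hlen⟩
  exact ⟨f 0, f 1, f 2, f 3, f.injective.ne (by decide), f.injective.ne (by decide),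
    f.toHom.map_adj (by decide), f.toHom.map_adj (by decide), f.toHom.map_adj (by decide),
    f.toHom.map_adj (by decide)⟩

end SimpleGraph.Walk

lemma nonvertical_line_unique {F : Type*} [Field F] {x y x' y' m b m' b' : F}
    (hne : (x, y) ≠ (x', y')) (h₁ : y = m * x + b) (h₂ : y' = m * x' + b)
    (h₁' : y = m' * x + b') (h₂' : y' = m' * x' + b') : (m, b) = (m', b') := by
  have hx : x - x' ≠ 0 := by
    refine sub_ne_zero.mpr fun hx => hne ?_
    subst hx
    rw [h₁, h₂]
  have hm : m = m' := by
    refine sub_eq_zero.mp ((mul_eq_zero.mp ?_).resolve_right hx)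
    linear_combination h₁' - h₂' - h₁ + h₂
  subst hm
  rw [show b = b' by linear_combination h₁' - h₁]

namespace biaffine

variable {F : Type} [Field F] {x y m b : F}

@[simp]
lemma adj_inl_inr : (biaffine F).Adj (.inl (x, y)) (.inr (m, b)) ↔ y = m * x + b := by
  simp [biaffine]

@[simp]
lemma adj_inr_inl : (biaffine F).Adj (.inr (m, b)) (.inl (x, y)) ↔ y = m * x + b := by
  simp [biaffine]

@[simp]
lemma not_adj_inl_inl (p p' : F × F) : ¬(biaffine F).Adj (.inl p) (.inl p') := by
  simp [biaffine]

@[simp]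
lemma not_adj_inr_inr (l l' : F × F) : ¬(biaffine F).Adj (.inr l) (.inr l') := by
  simp [biaffine]

lemma neighborSet_inl : (biaffine F).neighborSet (.inl (x, y)) =
    Set.range fun m : F => .inr (m, y - m * x) := by
  ext (_ | ⟨m, b⟩)
  · simp
  · simp [eq_sub_iff_add_eq, add_comm, eq_comm]

lemma neighborSet_inr : (biaffine F).neighborSet (.inr (m, b)) =
    Set.range fun x : F => .inl (x, m * x + b) := by
  ext (⟨x, y⟩ | _)
  · simp [eq_comm]
  · simp

lemma card_neighborSet (v : (F × F) ⊕ (F × F)) :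
    Nat.card ((biaffine F).neighborSet v) = Nat.card F := by
  rcases v with ⟨x, y⟩ | ⟨m, b⟩
  · rw [neighborSet_inl, Nat.card_range_of_injective]
    intro m m' h
    simpa using congrArg (fun v => (Sum.getRight? v).map Prod.fst) h
  · rw [neighborSet_inr, Nat.card_range_of_injective]
    intro x x' h
    simpa using congrArg (fun v => (Sum.getLeft? v).map Prod.fst) h

def sideColoring : (biaffine F).Coloring Bool :=
  Coloring.mk Sum.isLeft fun {v w} h => by
    rcases v with _ | _ <;> rcases w with _ | _ <;> simp_all

lemma not_adj_quadrilateral {a b c d : (F × F) ⊕ (F × F)} (hac : a ≠ c) (hbd : b ≠ d)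
    (hab : (biaffine F).Adj a b) (hbc : (biaffine F).Adj b c) (hcd : (biaffine F).Adj c d)
    (hda : (biaffine F).Adj d a) : False := by
  wlog ha : ∃ p, a = .inl p
  · obtain ⟨l, rfl⟩ : ∃ l, a = .inr l := by
      rcases a with p | l
      exacts [absurd ⟨p, rfl⟩ ha, ⟨l, rfl⟩]
    obtain ⟨p, rfl⟩ : ∃ p, b = .inl p := by
      rcases b with p | l
      exacts [⟨p, rfl⟩, (not_adj_inr_inr _ _ hab).elim]
    exact this hbd hac.symm hbc hcd hda hab ⟨p, rfl⟩
  obtain ⟨⟨x, y⟩, rfl⟩ := ha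
  rcases b with _ | ⟨m, b⟩ <;> rcases c with ⟨x', y'⟩ | _ <;> rcases d with _ | ⟨m', b'⟩ <;>
    simp only [ne_eq, Sum.inl.injEq, Sum.inr.injEq, adj_inl_inr, adj_inr_inl, not_adj_inl_inl,
      not_adj_inr_inr] at *
  exact hbd (nonvertical_line_unique hac hab hbc hda hcd)

lemma six_le_egirth : 6 ≤ (biaffine F).egirth := by
  refine le_egirth.mpr fun v p hp => ?_
  have h3 := hp.three_le_length
  have heven : Even p.length := (sideColoring.even_length_iff_congr p).mpr Iff.rfl
  have h4 : p.length ≠ 4 := fun h4 => by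
    obtain ⟨a, b, c, d, hac, hbd, hab, hbc, hcd, hda⟩ :=
      hp.exists_adj_of_length_eq_four h4
    exact not_adj_quadrilateral hac hbd hab hbc hcd hda
  obtain ⟨k, hk⟩ := heven
  exact_mod_cast (show 6 ≤ p.length by omega)

lemma egirth_le_six {a : F} (h₀ : a ≠ 0) (h₁ : a ≠ 1) : (biaffine F).egirth ≤ 6 := by
  have h₁' : a - 1 ≠ 0 := sub_ne_zero.mpr h₁
  let hexagon : (biaffine F).Walk (.inl (0, 0)) (.inl (0, 0)) :=
    .cons (v := .inr (0, 0)) (adj_inl_inr.mpr (by ring)) <|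
    .cons (v := .inl (1, 0)) (adj_inr_inl.mpr (by ring)) <|
    .cons (v := .inr (a, -a)) (adj_inl_inr.mpr (by ring)) <|
    .cons (v := .inl (a, a * (a - 1))) (adj_inr_inl.mpr (by ring)) <|
    .cons (v := .inr (a - 1, 0)) (adj_inl_inr.mpr (by ring)) <|
    .cons (adj_inr_inl.mpr (by ring)) .nil
  have hcycle : hexagon.IsCycle := by
    simp [hexagon, Walk.cons_isCycle_iff, h₀, h₁', h₁'.symm]
  exact (egirth_le_length hcycle).trans (by simp [hexagon])

lemma egirth_eq_six (hF : 3 ≤ ENat.card F) : (biaffine F).egirth = 6 := by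
  obtain ⟨a, h₀, h₁⟩ := ENat.exists_ne_ne_of_three_le hF 0 1
  exact (egirth_le_six h₀ h₁).antisymm six_le_egirth

end biaffine

/-- For a finite field `F` of order `q ≥ 3`, the biaffine incidence graph
`B_q` is `q`-regular, has `2q²` vertices, and has girth 6. -/
theorem stmt_11 (F : Type) [Field F] [Fintype F] (hq : 3 ≤ Fintype.card F) :
    (∀ v, Nat.card ((biaffine F).neighborSet v) = Fintype.card F) ∧
    Nat.card ((F × F) ⊕ (F × F)) = 2 * Fintype.card F ^ 2 ∧
    (biaffine F).girth = (6 : ℕ∞) := by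
  refine ⟨fun v => ?_, ?_, ?_⟩
  · rw [biaffine.card_neighborSet, Nat.card_eq_fintype_card]
  · simp only [Nat.card_eq_fintype_card, Fintype.card_sum, Fintype.card_prod]
    ring
  · have hF : 3 ≤ ENat.card F := by simpa [ENat.card_eq_coe_fintype_card] using hq
    simp [girth, biaffine.egirth_eq_six hF]
end
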